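/- The Lyapunov–Perron operator is Lipschitz on C^−: for all z, z̄ ∈ C^− one has ‖J(z) − J(z̄)‖ ≤ κ ‖z − z̄‖ with κ = K/(γ₁−ρ) + εK/(ρ−εγ₂). Moreover, if in addition ε < ρ / (γ₂ + 1/(1/K − 1/(γ₁−ρ))), then κ < 1, so J is a strict contraction on C^−. -/

import Mathlib

open MeasureTheory

/-- The weighted sup-norm `‖φ‖ = sup_{t ≤ 0} e^{w t} ‖φ(t)‖` on paths `(-∞,0] → H`
(with weight `w = ρ/ε`). -/
noncomputable def wnorm {H : Type*} [NormedAddCommGroup H] (w : ℝ) (φ : ℝ → H) : ℝ :=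
  ⨆ t : Set.Iic (0:ℝ), Real.exp (w * t.1) * ‖φ t.1‖

/-- Membership in the weighted space `C⁻_w`: continuity on `(-∞,0]` together with
finiteness of the weighted sup-norm `sup_{t ≤ 0} e^{w t} ‖φ(t)‖`. -/
def MemCminus {H : Type*} [NormedAddCommGroup H] (w : ℝ) (φ : ℝ → H) : Prop :=
  ContinuousOn φ (Set.Iic 0) ∧
    BddAbove (Set.range (fun t : Set.Iic (0:ℝ) => Real.exp (w * t.1) * ‖φ t.1‖))

/-! ### Auxiliary lemmas -/

section Aux

open Set Filter Topology

instance : Nonempty (Set.Iic (0:ℝ)) := ⟨⟨0, by simp⟩⟩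

lemma wnorm_nonneg {H : Type*} [NormedAddCommGroup H] (w : ℝ) (φ : ℝ → H) :
    0 ≤ wnorm w φ :=
  Real.iSup_nonneg fun t => by positivity

lemma le_wnorm {H : Type*} [NormedAddCommGroup H] {w : ℝ} {φ : ℝ → H}
    (hb : BddAbove (Set.range (fun t : Set.Iic (0:ℝ) => Real.exp (w * t.1) * ‖φ t.1‖)))
    {t : ℝ} (ht : t ≤ 0) : Real.exp (w * t) * ‖φ t‖ ≤ wnorm w φ :=
  le_ciSup hb ⟨t, ht⟩

lemma norm_le_of_wnorm {H : Type*} [NormedAddCommGroup H] {w : ℝ} {φ : ℝ → H}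
    (hb : BddAbove (Set.range (fun t : Set.Iic (0:ℝ) => Real.exp (w * t.1) * ‖φ t.1‖)))
    {t : ℝ} (ht : t ≤ 0) : ‖φ t‖ ≤ Real.exp (-(w * t)) * wnorm w φ := by
  have h := le_wnorm hb ht
  have he : (0:ℝ) < Real.exp (w * t) := Real.exp_pos _
  have : ‖φ t‖ = Real.exp (-(w * t)) * (Real.exp (w * t) * ‖φ t‖) := by
    rw [← mul_assoc, ← Real.exp_add]; simp
  rw [this]
  exact mul_le_mul_of_nonneg_left h (Real.exp_pos _).le

lemma bddAbove_sub {H : Type*} [NormedAddCommGroup H] {w : ℝ} {φ ψ : ℝ → H}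
    (hφ : BddAbove (Set.range (fun t : Set.Iic (0:ℝ) => Real.exp (w * t.1) * ‖φ t.1‖)))
    (hψ : BddAbove (Set.range (fun t : Set.Iic (0:ℝ) => Real.exp (w * t.1) * ‖ψ t.1‖))) :
    BddAbove (Set.range (fun t : Set.Iic (0:ℝ) =>
      Real.exp (w * t.1) * ‖φ t.1 - ψ t.1‖)) := by
  obtain ⟨M, hM⟩ := hφ
  obtain ⟨N, hN⟩ := hψ
  refine ⟨M + N, ?_⟩
  rintro r ⟨t, rfl⟩
  calc Real.exp (w * t.1) * ‖φ t.1 - ψ t.1‖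
      ≤ Real.exp (w * t.1) * (‖φ t.1‖ + ‖ψ t.1‖) := by
        gcongr; exact norm_sub_le _ _
    _ = Real.exp (w * t.1) * ‖φ t.1‖ + Real.exp (w * t.1) * ‖ψ t.1‖ := mul_add _ _ _
    _ ≤ M + N := add_le_add (hM ⟨t, rfl⟩) (hN ⟨t, rfl⟩)

/-- Joint continuity of `s ↦ T (u s) (h s)` from strong continuity plus a uniform bound. -/
lemma contOn_apply {H : Type*} [NormedAddCommGroup H] [NormedSpace ℝ H]
    (T : ℝ → H →L[ℝ] H) (B : Set ℝ) (C : ℝ)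
    (hTc : ∀ v : H, ContinuousOn (fun u => T u v) B)
    (hTb : ∀ u ∈ B, ∀ v : H, ‖T u v‖ ≤ C * ‖v‖)
    {A : Set ℝ} {u : ℝ → ℝ} {h : ℝ → H}
    (hu : ContinuousOn u A) (hmaps : Set.MapsTo u A B) (hh : ContinuousOn h A) :
    ContinuousOn (fun s => T (u s) (h s)) A := by
  intro s₀ hs₀
  have part2 : ContinuousWithinAt (fun s => T (u s) (h s₀)) A s₀ :=
    ((hTc (h s₀)) (u s₀) (hmaps hs₀)).comp (hu s₀ hs₀) hmaps
  have part1 : Filter.Tendsto (fun s => T (u s) (h s - h s₀)) (nhdsWithin s₀ A) (nhds 0) := by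
    have hbnd : ∀ᶠ s in nhdsWithin s₀ A, ‖T (u s) (h s - h s₀)‖ ≤ C * ‖h s - h s₀‖ :=
      Filter.eventually_of_mem self_mem_nhdsWithin fun s hs => hTb (u s) (hmaps hs) _
    have hlim : Filter.Tendsto (fun s => C * ‖h s - h s₀‖) (nhdsWithin s₀ A) (nhds 0) := by
      have h2 : Filter.Tendsto (fun s => ‖h s - h s₀‖) (nhdsWithin s₀ A) (nhds 0) :=
        tendsto_iff_norm_sub_tendsto_zero.1 (hh s₀ hs₀)
      simpa using h2.const_mul C
    exact squeeze_zero_norm' hbnd hlim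
  have heq : (fun s => T (u s) (h s)) = fun s => T (u s) (h s - h s₀) + T (u s) (h s₀) := by
    funext s; rw [map_sub]; abel
  unfold ContinuousWithinAt
  rw [heq]
  have := part1.add part2
  simpa using this

lemma integrableOn_exp_mul_Iic' {c : ℝ} (hc : 0 < c) (t : ℝ) :
    IntegrableOn (fun s : ℝ => Real.exp (c * s)) (Set.Iic t) := by
  rw [integrableOn_Iic_iff_integrableOn_Iio,
    ← integrable_indicator_iff measurableSet_Iio]
  have h := ((integrable_indicator_iff measurableSet_Ioi).2
    (exp_neg_integrableOn_Ioi (-t) hc)).comp_neg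
  convert h using 1
  · rfl
  ext x
  by_cases hx : x < t
  · have hx' : -t < -x := by linarith
    simp [Set.indicator, hx, hx', mul_comm]
  · have hx' : ¬ (-t < -x) := by intro h'; apply hx; linarith
    simp [Set.indicator, hx, hx']

lemma integral_exp_mul_Iic' {c : ℝ} (hc : 0 < c) (t : ℝ) :
    ∫ s in Set.Iic t, Real.exp (c * s) = Real.exp (c * t) / c := by
  have h1 := integral_comp_neg_Iic t (fun x : ℝ => Real.exp (-(c * x)))
  simp only [mul_neg, neg_neg] at h1
  rw [h1]
  have h2 : (∫ x in Set.Ioi (-t), Real.exp (-(c * x)))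
      = c⁻¹ • ∫ x in Set.Ioi (c * (-t)), Real.exp (-x) :=
    integral_comp_mul_left_Ioi (fun u => Real.exp (-u)) (-t) hc
  rw [h2, integral_exp_neg_Ioi]
  simp only [smul_eq_mul, mul_neg, neg_neg]
  rw [div_eq_inv_mul]

end Aux

set_option maxHeartbeats 1600000

/-- The Lyapunov–Perron operator is Lipschitz on `C⁻`:
`‖J(z) - J(z̄)‖ ≤ κ ‖z - z̄‖` with `κ = K/(γ₁-ρ) + εK/(ρ-εγ₂)`. Moreover, if in addition
`ε < ρ / (γ₂ + 1/(1/K - 1/(γ₁-ρ)))`, then `κ < 1`, so `J` is a strict contraction. -/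
theorem stmt4
    {H₁ H₂ : Type*}
    [NormedAddCommGroup H₁] [InnerProductSpace ℝ H₁] [CompleteSpace H₁]
    [TopologicalSpace.SeparableSpace H₁]
    [NormedAddCommGroup H₂] [InnerProductSpace ℝ H₂] [CompleteSpace H₂]
    [TopologicalSpace.SeparableSpace H₂]
    (S : ℝ → H₁ →L[ℝ] H₁) (G : ℝ → H₂ →L[ℝ] H₂)
    (γ₁ γ₂ : ℝ) (hγ₁ : 0 < γ₁) (hγ₂ : 0 < γ₂)
    (hS0 : S 0 = 1)
    (hSadd : ∀ t s : ℝ, 0 ≤ t → 0 ≤ s → S (t + s) = (S t).comp (S s))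
    (hScont : ∀ x : H₁, ContinuousOn (fun t : ℝ => S t x) (Set.Ici 0))
    (hSdecay : ∀ t : ℝ, 0 ≤ t → ∀ x : H₁, ‖S t x‖ ≤ Real.exp (-γ₁ * t) * ‖x‖)
    (hG0 : G 0 = 1)
    (hGadd : ∀ t s : ℝ, G (t + s) = (G t).comp (G s))
    (hGcont : ∀ y : H₂, Continuous fun t : ℝ => G t y)
    (hGdecay : ∀ t : ℝ, t ≤ 0 → ∀ y : H₂, ‖G t y‖ ≤ Real.exp (-γ₂ * t) * ‖y‖)
    (f : H₁ × H₂ → H₁) (g : H₁ × H₂ → H₂) (K : ℝ) (hK : 0 < K)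
    (hf : ∀ p q : H₁ × H₂, ‖f p - f q‖ ≤ K * (‖p.1 - q.1‖ + ‖p.2 - q.2‖))
    (hg : ∀ p q : H₁ × H₂, ‖g p - g q‖ ≤ K * (‖p.1 - q.1‖ + ‖p.2 - q.2‖))
    (hf0 : f (0, 0) = 0) (hg0 : g (0, 0) = 0)
    (ε ρ : ℝ) (hε : 0 < ε) (hρ : 0 < ρ)
    (hgap : K < γ₁ - ρ) (hρε : 0 < ρ - ε * γ₂)
    (xhat : ℝ → H₁) (hxhat : MemCminus (ρ / ε) xhat)
    (ξ : H₂)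
    (x xb : ℝ → H₁) (y yb : ℝ → H₂)
    (hx : MemCminus (ρ / ε) x) (hy : MemCminus (ρ / ε) y)
    (hxb : MemCminus (ρ / ε) xb) (hyb : MemCminus (ρ / ε) yb)
    (J₁ Jb₁ : ℝ → H₁) (J₂ Jb₂ : ℝ → H₂)
    (hJ₁ : ∀ t : ℝ,
      J₁ t = ε⁻¹ • ∫ s in Set.Iic t, S ((t - s) / ε) (f (x s + xhat s, y s)))
    (hJ₂ : ∀ t : ℝ,
      J₂ t = G t ξ + ∫ s in (0:ℝ)..t, G (t - s) (g (x s + xhat s, y s)))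
    (hJb₁ : ∀ t : ℝ,
      Jb₁ t = ε⁻¹ • ∫ s in Set.Iic t, S ((t - s) / ε) (f (xb s + xhat s, yb s)))
    (hJb₂ : ∀ t : ℝ,
      Jb₂ t = G t ξ + ∫ s in (0:ℝ)..t, G (t - s) (g (xb s + xhat s, yb s))) :
    (wnorm (ρ / ε) (fun t => J₁ t - Jb₁ t) + wnorm (ρ / ε) (fun t => J₂ t - Jb₂ t) ≤
      (K / (γ₁ - ρ) + ε * K / (ρ - ε * γ₂)) *
        (wnorm (ρ / ε) (fun t => x t - xb t) + wnorm (ρ / ε) (fun t => y t - yb t))) ∧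
    (ε < ρ / (γ₂ + 1 / (1 / K - 1 / (γ₁ - ρ))) →
      K / (γ₁ - ρ) + ε * K / (ρ - ε * γ₂) < 1) := by
  -- basic positivity facts
  have hγρ : 0 < γ₁ - ρ := hK.trans hgap
  set w : ℝ := ρ / ε with hw
  have hwpos : 0 < w := div_pos hρ hε
  have hc1 : 0 < γ₁ / ε - w := by
    rw [hw, div_sub_div_same]
    exact div_pos hγρ hε
  have hc1' : γ₁ / ε - w = (γ₁ - ρ) / ε := by rw [hw, div_sub_div_same]
  have hc2 : 0 < w - γ₂ := by
    rw [hw, sub_pos, lt_div_iff₀ hε]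
    nlinarith
  have hc2' : w - γ₂ = (ρ - ε * γ₂) / ε := by
    rw [hw]; field_simp
  -- continuity of f and g
  have hfc : Continuous f := by
    refine (LipschitzWith.of_dist_le_mul (K := (2 * K).toNNReal) fun p q => ?_).continuous
    rw [Real.coe_toNNReal _ (by positivity), dist_eq_norm]
    have h1 : ‖p.1 - q.1‖ ≤ dist p q := by
      rw [← dist_eq_norm, Prod.dist_eq]; exact le_max_left _ _
    have h2 : ‖p.2 - q.2‖ ≤ dist p q := by
      rw [← dist_eq_norm, Prod.dist_eq]; exact le_max_right _ _
    have h3 := hf p q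
    nlinarith [mul_le_mul_of_nonneg_left h1 hK.le, mul_le_mul_of_nonneg_left h2 hK.le]
  have hgc : Continuous g := by
    refine (LipschitzWith.of_dist_le_mul (K := (2 * K).toNNReal) fun p q => ?_).continuous
    rw [Real.coe_toNNReal _ (by positivity), dist_eq_norm]
    have h1 : ‖p.1 - q.1‖ ≤ dist p q := by
      rw [← dist_eq_norm, Prod.dist_eq]; exact le_max_left _ _
    have h2 : ‖p.2 - q.2‖ ≤ dist p q := by
      rw [← dist_eq_norm, Prod.dist_eq]; exact le_max_right _ _
    have h3 := hg p q
    nlinarith [mul_le_mul_of_nonneg_left h1 hK.le, mul_le_mul_of_nonneg_left h2 hK.le]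
  obtain ⟨hxc, hxB⟩ := hx
  obtain ⟨hyc, hyB⟩ := hy
  obtain ⟨hxbc, hxbB⟩ := hxb
  obtain ⟨hybc, hybB⟩ := hyb
  obtain ⟨hxhc, hxhB⟩ := hxhat
  set Δ₁ := wnorm w (fun t => x t - xb t) with hΔ₁
  set Δ₂ := wnorm w (fun t => y t - yb t) with hΔ₂
  have hΔ₁0 : 0 ≤ Δ₁ := wnorm_nonneg _ _
  have hΔ₂0 : 0 ≤ Δ₂ := wnorm_nonneg _ _
  have hBx := bddAbove_sub hxB hxbB
  have hBy := bddAbove_sub hyB hybB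
  have hdx : ∀ s : ℝ, s ≤ 0 → ‖x s - xb s‖ ≤ Real.exp (-(w * s)) * Δ₁ := fun s hs =>
    norm_le_of_wnorm (φ := fun u => x u - xb u) hBx hs
  have hdy : ∀ s : ℝ, s ≤ 0 → ‖y s - yb s‖ ≤ Real.exp (-(w * s)) * Δ₂ := fun s hs =>
    norm_le_of_wnorm (φ := fun u => y u - yb u) hBy hs
  have hf0' : f 0 = 0 := hf0
  have hfn : ∀ p : H₁ × H₂, ‖f p‖ ≤ K * (‖p.1‖ + ‖p.2‖) := fun p => by
    have := hf p (0, 0); simpa [hf0', hf0] using this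
  -- key exponential identity
  have expkey : ∀ t s : ℝ, Real.exp (-γ₁ * ((t - s) / ε)) * Real.exp (-(w * s))
      = Real.exp (-(γ₁ / ε) * t) * Real.exp ((γ₁ / ε - w) * s) := by
    intro t s
    rw [← Real.exp_add, ← Real.exp_add]
    congr 1
    field_simp
    ring
  -- generic integrability for the first component
  have hIntGen : ∀ (x' : ℝ → H₁) (y' : ℝ → H₂),
      ContinuousOn x' (Set.Iic 0) → ContinuousOn y' (Set.Iic 0) →
      BddAbove (Set.range (fun t : Set.Iic (0:ℝ) => Real.exp (w * t.1) * ‖x' t.1‖)) →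
      BddAbove (Set.range (fun t : Set.Iic (0:ℝ) => Real.exp (w * t.1) * ‖y' t.1‖)) →
      ∀ t : ℝ, t ≤ 0 →
      IntegrableOn (fun s => S ((t - s) / ε) (f (x' s + xhat s, y' s))) (Set.Iic t) := by
    intro x' y' hx'c hy'c hx'B hy'B t ht0
    have hIt : Set.Iic t ⊆ Set.Iic 0 := Set.Iic_subset_Iic.2 ht0
    have humaps : Set.MapsTo (fun s => (t - s) / ε) (Set.Iic t) (Set.Ici 0) := by
      intro s hs
      simp only [Set.mem_Ici]
      have hst : s ≤ t := hs
      exact div_nonneg (by linarith) hε.le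
    have hSn : ∀ u ∈ Set.Ici (0:ℝ), ∀ v : H₁, ‖S u v‖ ≤ 1 * ‖v‖ := by
      intro u hu v
      refine (hSdecay u hu v).trans ?_
      rw [one_mul]
      have h1 : Real.exp (-γ₁ * u) ≤ 1 := by
        rw [Real.exp_le_one_iff]
        have : (0:ℝ) ≤ u := hu
        nlinarith
      nlinarith [norm_nonneg v, Real.exp_pos (-γ₁ * u)]
    have hucont : ContinuousOn (fun s : ℝ => (t - s) / ε) (Set.Iic t) :=
      ((continuous_const.sub continuous_id).div_const ε).continuousOn
    have hh1c : ContinuousOn (fun s => f (x' s + xhat s, y' s)) (Set.Iic t) :=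
      (hfc.comp_continuousOn ((hx'c.add hxhc).prodMk hy'c)).mono hIt
    have hφc : ContinuousOn (fun s => S ((t - s) / ε) (f (x' s + xhat s, y' s))) (Set.Iic t) :=
      contOn_apply S (Set.Ici 0) 1 hScont hSn hucont humaps hh1c
    set M' : ℝ := wnorm w x' + wnorm w xhat + wnorm w y' with hM'
    refine Integrable.mono'
      ((integrableOn_exp_mul_Iic' hc1 t).const_mul (K * M' * Real.exp (-(γ₁ / ε) * t)))
      (hφc.aestronglyMeasurable measurableSet_Iic) ?_
    refine (ae_restrict_mem measurableSet_Iic).mono fun s hs => ?_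
    have hs0 : s ≤ 0 := le_trans hs ht0
    have h1n : ‖f (x' s + xhat s, y' s)‖ ≤ K * (Real.exp (-(w * s)) * M') := by
      refine (hfn _).trans ?_
      have e1 : ‖x' s + xhat s‖ ≤ Real.exp (-(w * s)) * wnorm w x'
          + Real.exp (-(w * s)) * wnorm w xhat :=
        (norm_add_le _ _).trans (add_le_add (norm_le_of_wnorm hx'B hs0)
          (norm_le_of_wnorm hxhB hs0))
      have e2 : ‖y' s‖ ≤ Real.exp (-(w * s)) * wnorm w y' := norm_le_of_wnorm hy'B hs0
      have hKi : (0:ℝ) ≤ K := hK.le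
      calc K * (‖(x' s + xhat s, y' s).1‖ + ‖(x' s + xhat s, y' s).2‖)
          = K * (‖x' s + xhat s‖ + ‖y' s‖) := rfl
        _ ≤ K * ((Real.exp (-(w * s)) * wnorm w x' + Real.exp (-(w * s)) * wnorm w xhat)
            + Real.exp (-(w * s)) * wnorm w y') := by
            apply mul_le_mul_of_nonneg_left _ hKi
            exact add_le_add e1 e2
        _ = K * (Real.exp (-(w * s)) * M') := by rw [hM']; ring
    calc ‖S ((t - s) / ε) (f (x' s + xhat s, y' s))‖
        ≤ Real.exp (-γ₁ * ((t - s) / ε)) * ‖f (x' s + xhat s, y' s)‖ :=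
          hSdecay _ (humaps hs) _
      _ ≤ Real.exp (-γ₁ * ((t - s) / ε)) * (K * (Real.exp (-(w * s)) * M')) :=
          mul_le_mul_of_nonneg_left h1n (Real.exp_pos _).le
      _ = (K * M') * (Real.exp (-γ₁ * ((t - s) / ε)) * Real.exp (-(w * s))) := by ring
      _ = K * M' * Real.exp (-(γ₁ / ε) * t) * Real.exp ((γ₁ / ε - w) * s) := by
          rw [expkey t s]; ring
  -- Part 1: bound for the first component
  have hpart1 : wnorm w (fun t => J₁ t - Jb₁ t) ≤ K / (γ₁ - ρ) * (Δ₁ + Δ₂) := by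
    unfold wnorm
    apply ciSup_le
    rintro ⟨t, ht⟩
    have ht0 : t ≤ 0 := ht
    simp only
    have hφInt := hIntGen x y hxc hyc hxB hyB t ht0
    have hφbInt := hIntGen xb yb hxbc hybc hxbB hybB t ht0
    have humaps : Set.MapsTo (fun s => (t - s) / ε) (Set.Iic t) (Set.Ici 0) := by
      intro s hs
      simp only [Set.mem_Ici]
      have hst : s ≤ t := hs
      exact div_nonneg (by linarith) hε.le
    have hJdiff : J₁ t - Jb₁ t = ε⁻¹ • ∫ s in Set.Iic t,
        (S ((t - s) / ε) (f (x s + xhat s, y s))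
          - S ((t - s) / ε) (f (xb s + xhat s, yb s))) := by
      rw [hJ₁ t, hJb₁ t, ← smul_sub, ← integral_sub hφInt hφbInt]
    set C : ℝ := K * (Δ₁ + Δ₂) * Real.exp (-(γ₁ / ε) * t) with hC
    have hC0 : 0 ≤ C := by positivity
    have hnormInt : ‖∫ s in Set.Iic t,
        (S ((t - s) / ε) (f (x s + xhat s, y s))
          - S ((t - s) / ε) (f (xb s + xhat s, yb s)))‖
        ≤ ∫ s in Set.Iic t, C * Real.exp ((γ₁ / ε - w) * s) := by
      refine norm_integral_le_of_norm_le
        ((integrableOn_exp_mul_Iic' hc1 t).const_mul C) ?_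
      refine (ae_restrict_mem measurableSet_Iic).mono fun s hs => ?_
      have hs0 : s ≤ 0 := le_trans hs ht0
      rw [← map_sub]
      have hd : ‖f (x s + xhat s, y s) - f (xb s + xhat s, yb s)‖
          ≤ K * (Real.exp (-(w * s)) * (Δ₁ + Δ₂)) := by
        refine (hf _ _).trans ?_
        simp only [add_sub_add_right_eq_sub]
        have h1 := hdx s hs0
        have h2 := hdy s hs0
        calc K * (‖x s - xb s‖ + ‖y s - yb s‖)
            ≤ K * (Real.exp (-(w * s)) * Δ₁ + Real.exp (-(w * s)) * Δ₂) := by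
              apply mul_le_mul_of_nonneg_left _ hK.le
              exact add_le_add h1 h2
          _ = K * (Real.exp (-(w * s)) * (Δ₁ + Δ₂)) := by ring
      calc ‖S ((t - s) / ε) (f (x s + xhat s, y s) - f (xb s + xhat s, yb s))‖
          ≤ Real.exp (-γ₁ * ((t - s) / ε))
            * ‖f (x s + xhat s, y s) - f (xb s + xhat s, yb s)‖ :=
            hSdecay _ (humaps hs) _
        _ ≤ Real.exp (-γ₁ * ((t - s) / ε)) * (K * (Real.exp (-(w * s)) * (Δ₁ + Δ₂))) :=
            mul_le_mul_of_nonneg_left hd (Real.exp_pos _).le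
        _ = (K * (Δ₁ + Δ₂)) * (Real.exp (-γ₁ * ((t - s) / ε)) * Real.exp (-(w * s))) := by
            ring
        _ = C * Real.exp ((γ₁ / ε - w) * s) := by rw [expkey t s, hC]; ring
    have hval : ∫ s in Set.Iic t, C * Real.exp ((γ₁ / ε - w) * s)
        = C * (Real.exp ((γ₁ / ε - w) * t) / (γ₁ / ε - w)) := by
      rw [integral_const_mul, integral_exp_mul_Iic' hc1 t]
    have e1 : Real.exp (w * t) * Real.exp (-(γ₁ / ε) * t) * Real.exp ((γ₁ / ε - w) * t)
        = 1 := by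
      rw [← Real.exp_add, ← Real.exp_add, ← Real.exp_zero]
      congr 1
      ring
    have h2den : ε⁻¹ / (γ₁ / ε - w) = 1 / (γ₁ - ρ) := by
      rw [hc1']
      field_simp
    calc Real.exp (w * t) * ‖J₁ t - Jb₁ t‖
        = Real.exp (w * t) * (ε⁻¹ * ‖∫ s in Set.Iic t,
            (S ((t - s) / ε) (f (x s + xhat s, y s))
              - S ((t - s) / ε) (f (xb s + xhat s, yb s)))‖) := by
          rw [hJdiff, norm_smul, Real.norm_eq_abs, abs_of_pos (inv_pos.2 hε)]
      _ ≤ Real.exp (w * t) * (ε⁻¹ * (C * (Real.exp ((γ₁ / ε - w) * t) / (γ₁ / ε - w)))) := by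
          rw [← hval]
          apply mul_le_mul_of_nonneg_left _ (Real.exp_pos _).le
          exact mul_le_mul_of_nonneg_left hnormInt (inv_pos.2 hε).le
      _ = (Real.exp (w * t) * Real.exp (-(γ₁ / ε) * t) * Real.exp ((γ₁ / ε - w) * t))
            * (K * (Δ₁ + Δ₂)) * (ε⁻¹ / (γ₁ / ε - w)) := by rw [hC]; ring
      _ = K / (γ₁ - ρ) * (Δ₁ + Δ₂) := by rw [e1, h2den]; ring
  -- Part 2: bound for the second component
  have hgn2 : ∀ t : ℝ, t ≤ 0 → ∀ u ∈ Set.Icc t 0, ∀ v : H₂,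
      ‖G u v‖ ≤ Real.exp (-γ₂ * t) * ‖v‖ := by
    intro t ht0 u hu v
    refine (hGdecay u hu.2 v).trans ?_
    have : Real.exp (-γ₂ * u) ≤ Real.exp (-γ₂ * t) := by
      apply Real.exp_le_exp.2
      nlinarith [hu.1]
    nlinarith [norm_nonneg v, Real.exp_pos (-γ₂ * u)]
  have hIntGen2 : ∀ (x' : ℝ → H₁) (y' : ℝ → H₂),
      ContinuousOn x' (Set.Iic 0) → ContinuousOn y' (Set.Iic 0) →
      ∀ t : ℝ, t ≤ 0 →
      IntervalIntegrable (fun s => G (t - s) (g (x' s + xhat s, y' s))) volume 0 t := by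
    intro x' y' hx'c hy'c t ht0
    apply ContinuousOn.intervalIntegrable
    rw [Set.uIcc_of_ge ht0]
    have hIcc : Set.Icc t 0 ⊆ Set.Iic 0 := fun s hs => hs.2
    have humaps : Set.MapsTo (fun s => t - s) (Set.Icc t 0) (Set.Icc t 0) := by
      intro s hs
      simp only [Set.mem_Icc] at hs ⊢
      exact ⟨by linarith [hs.2], by linarith [hs.1]⟩
    exact contOn_apply G (Set.Icc t 0) (Real.exp (-γ₂ * t))
      (fun v => (hGcont v).continuousOn) (hgn2 t ht0)
      ((continuous_const.sub continuous_id).continuousOn) humaps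
      ((hgc.comp_continuousOn ((hx'c.add hxhc).prodMk hy'c)).mono hIcc)
  have hpart2 : wnorm w (fun t => J₂ t - Jb₂ t) ≤ ε * K / (ρ - ε * γ₂) * (Δ₁ + Δ₂) := by
    unfold wnorm
    apply ciSup_le
    rintro ⟨t, ht⟩
    have ht0 : t ≤ 0 := ht
    simp only
    have hI := hIntGen2 x y hxc hyc t ht0
    have hIb := hIntGen2 xb yb hxbc hybc t ht0
    have hJd2 : ‖J₂ t - Jb₂ t‖ = ‖∫ s in Set.Ioc t 0,
        (G (t - s) (g (x s + xhat s, y s)) - G (t - s) (g (xb s + xhat s, yb s)))‖ := by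
      rw [hJ₂ t, hJb₂ t, add_sub_add_left_eq_sub, ← intervalIntegral.integral_sub hI hIb,
        intervalIntegral.integral_symm t 0, norm_neg,
        intervalIntegral.integral_of_le ht0]
    set C : ℝ := K * (Δ₁ + Δ₂) * Real.exp (-γ₂ * t) with hC
    have hC0 : 0 ≤ C := by positivity
    have ha : γ₂ - w ≠ 0 := by intro h; rw [sub_eq_zero] at h; rw [h] at hc2; simp at hc2
    have hbInt : IntegrableOn (fun s => C * Real.exp ((γ₂ - w) * s)) (Set.Ioc t 0) := by
      apply Continuous.integrableOn_Ioc
      exact continuous_const.mul (Real.continuous_exp.comp (continuous_const.mul continuous_id))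
    have hnormInt : ‖∫ s in Set.Ioc t 0,
        (G (t - s) (g (x s + xhat s, y s)) - G (t - s) (g (xb s + xhat s, yb s)))‖
        ≤ ∫ s in Set.Ioc t 0, C * Real.exp ((γ₂ - w) * s) := by
      refine norm_integral_le_of_norm_le hbInt ?_
      refine (ae_restrict_mem measurableSet_Ioc).mono fun s hs => ?_
      have hs0 : s ≤ 0 := hs.2
      have hts : t - s ≤ 0 := by linarith [hs.1]
      rw [← map_sub]
      have hd : ‖g (x s + xhat s, y s) - g (xb s + xhat s, yb s)‖
          ≤ K * (Real.exp (-(w * s)) * (Δ₁ + Δ₂)) := by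
        refine (hg _ _).trans ?_
        simp only [add_sub_add_right_eq_sub]
        have h1 := hdx s hs0
        have h2 := hdy s hs0
        calc K * (‖x s - xb s‖ + ‖y s - yb s‖)
            ≤ K * (Real.exp (-(w * s)) * Δ₁ + Real.exp (-(w * s)) * Δ₂) := by
              apply mul_le_mul_of_nonneg_left _ hK.le
              exact add_le_add h1 h2
          _ = K * (Real.exp (-(w * s)) * (Δ₁ + Δ₂)) := by ring
      have eE : Real.exp (-γ₂ * (t - s)) * Real.exp (-(w * s))
          = Real.exp (-γ₂ * t) * Real.exp ((γ₂ - w) * s) := by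
        rw [← Real.exp_add, ← Real.exp_add]
        congr 1
        ring
      calc ‖G (t - s) (g (x s + xhat s, y s) - g (xb s + xhat s, yb s))‖
          ≤ Real.exp (-γ₂ * (t - s))
            * ‖g (x s + xhat s, y s) - g (xb s + xhat s, yb s)‖ := hGdecay _ hts _
        _ ≤ Real.exp (-γ₂ * (t - s)) * (K * (Real.exp (-(w * s)) * (Δ₁ + Δ₂))) :=
            mul_le_mul_of_nonneg_left hd (Real.exp_pos _).le
        _ = (K * (Δ₁ + Δ₂)) * (Real.exp (-γ₂ * (t - s)) * Real.exp (-(w * s))) := by ring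
        _ = C * Real.exp ((γ₂ - w) * s) := by rw [eE, hC]; ring
    have hval : ∫ s in Set.Ioc t 0, C * Real.exp ((γ₂ - w) * s)
        = C * ((1 - Real.exp ((γ₂ - w) * t)) / (γ₂ - w)) := by
      rw [integral_const_mul, ← intervalIntegral.integral_of_le ht0]
      rw [intervalIntegral.integral_comp_mul_left (fun u => Real.exp u) ha]
      rw [integral_exp]
      simp only [mul_zero, Real.exp_zero, smul_eq_mul]
      ring
    have e1 : Real.exp (w * t) * Real.exp (-γ₂ * t) = Real.exp ((w - γ₂) * t) := by
      rw [← Real.exp_add]; congr 1; ring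
    have e2 : Real.exp ((w - γ₂) * t) * Real.exp ((γ₂ - w) * t) = 1 := by
      rw [← Real.exp_add, ← Real.exp_zero]; congr 1; ring
    calc Real.exp (w * t) * ‖J₂ t - Jb₂ t‖
        ≤ Real.exp (w * t) * (C * ((1 - Real.exp ((γ₂ - w) * t)) / (γ₂ - w))) := by
          rw [hJd2, ← hval]
          exact mul_le_mul_of_nonneg_left hnormInt (Real.exp_pos _).le
      _ = (K * (Δ₁ + Δ₂)) * ((Real.exp (w * t) * Real.exp (-γ₂ * t))
            * (1 - Real.exp ((γ₂ - w) * t)) / (γ₂ - w)) := by rw [hC]; ring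
      _ = (K * (Δ₁ + Δ₂)) * ((Real.exp ((w - γ₂) * t) - 1) / (γ₂ - w)) := by
          rw [e1, mul_sub, mul_one, e2]
      _ = (K * (Δ₁ + Δ₂)) * ((1 - Real.exp ((w - γ₂) * t)) / (w - γ₂)) := by
          rw [show Real.exp ((w - γ₂) * t) - 1 = -(1 - Real.exp ((w - γ₂) * t)) by ring,
            show γ₂ - w = -(w - γ₂) by ring, neg_div_neg_eq]
      _ ≤ (K * (Δ₁ + Δ₂)) * (1 / (w - γ₂)) := by
          apply mul_le_mul_of_nonneg_left _ (mul_nonneg hK.le (by linarith))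
          exact (div_le_div_iff_of_pos_right hc2).2 (by linarith [Real.exp_pos ((w - γ₂) * t)])
      _ = ε * K / (ρ - ε * γ₂) * (Δ₁ + Δ₂) := by
          rw [hc2', one_div_div]
          ring
  constructor
  · calc wnorm w (fun t => J₁ t - Jb₁ t) + wnorm w (fun t => J₂ t - Jb₂ t)
        ≤ K / (γ₁ - ρ) * (Δ₁ + Δ₂) + ε * K / (ρ - ε * γ₂) * (Δ₁ + Δ₂) :=
          add_le_add hpart1 hpart2
      _ = (K / (γ₁ - ρ) + ε * K / (ρ - ε * γ₂)) * (Δ₁ + Δ₂) := by ring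
  · intro hsmall
    have ha : 0 < 1 / K - 1 / (γ₁ - ρ) := by
      rw [sub_pos]
      exact one_div_lt_one_div_of_lt hK hgap
    have hD : 0 < γ₂ + 1 / (1 / K - 1 / (γ₁ - ρ)) := by positivity
    have h1 : ε * (γ₂ + 1 / (1 / K - 1 / (γ₁ - ρ))) < ρ := (lt_div_iff₀ hD).1 hsmall
    have h2 : ε / (1 / K - 1 / (γ₁ - ρ)) < ρ - ε * γ₂ := by
      rw [div_eq_mul_one_div]
      nlinarith
    have h3 : ε < (ρ - ε * γ₂) * (1 / K - 1 / (γ₁ - ρ)) := by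
      rw [div_lt_iff₀ ha] at h2
      linarith [h2]
    have h4 : ε * K / (ρ - ε * γ₂) < K * (1 / K - 1 / (γ₁ - ρ)) := by
      rw [div_lt_iff₀ hρε]
      nlinarith
    have h5 : K * (1 / K - 1 / (γ₁ - ρ)) = 1 - K / (γ₁ - ρ) := by
      field_simp
    linarith [h4, h5.symm.le]
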